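/- arXiv:1209.2890 — 5 statements merged into one kernel-verified Lean document; each statement's English description precedes it below -/
import Mathlib

section
/- The multiset ordering >_m on finite multisets over a set S with a well-founded strict order > is itself well-founded, where >_m is the smallest transitive relation such that a ⊎ [α] >_m a ⊎ b whenever every element β of b satisfies α > β. -/
/-- One step of the multiset ordering: `a ⊎ {α}` is above `a ⊎ b`
whenever every element `β` of `b` satisfies `α > β` (i.e. `r α β`). -/
inductive MultisetStep {S : Type*} (r : S → S → Prop) : Multiset S → Multiset S → Prop
  | step (a b : Multiset S) (α : S) (h : ∀ β ∈ b, r α β) :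
      MultisetStep r (a + {α}) (a + b)

/-! A step of the multiset ordering is a move of the hydra game `Relation.CutExpand` (cut off the
head `α`, grow back the heads `b` below it), whose termination is `WellFounded.cutExpand`. -/

theorem MultisetStep.cutExpand {S : Type*} {r : S → S → Prop} {M N : Multiset S}
    (h : MultisetStep r M N) : Relation.CutExpand (flip r) N M := by
  obtain ⟨a, b, α, hb⟩ := h
  exact ⟨b, α, hb, add_right_comm a b {α}⟩

theorem wellFounded_flip_multisetStep {S : Type*} {r : S → S → Prop}
    (hr : WellFounded (flip r)) : WellFounded (flip (MultisetStep r)) :=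
  Subrelation.wf MultisetStep.cutExpand hr.cutExpand

/-- The multiset ordering `>_m` (the transitive closure of `MultisetStep r`) on finite
multisets over `S` is well-founded whenever the strict order `r` (`α > β` is `r α β`)
is well-founded. -/
theorem multiset_ordering_wellFounded {S : Type*} (r : S → S → Prop)
    (hr : WellFounded (flip r)) :
    WellFounded (flip (Relation.TransGen (MultisetStep r))) :=
  Subrelation.wf Relation.transGen_swap.mpr (wellFounded_flip_multisetStep hr).transGen
end

section
/- In the category MRel (objects: sets; morphisms S → T: subsets of Multiset S × T), composition t ∘ s = {(a, β) | ∃ k, ∃ (a₁,α₁),…,(a_k,α_k) ∈ s, a = a₁ ⊎ ⋯ ⊎ a_k and ([α₁,…,α_k], β) ∈ t} is associative. -/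
/-- Composition in the category `MRel`: a morphism from `S` to `T` is a subset of
`Multiset S × T`, and `(a, β) ∈ t ∘ s` iff there is a multiset `l` of pairs of `s`
whose first components sum to `a` and whose multiset of second components is related
to `β` by `t`. -/
def MComp {S T U : Type*} (t : Set (Multiset T × U)) (s : Set (Multiset S × T)) :
    Set (Multiset S × U) :=
  {p | ∃ l : Multiset (Multiset S × T), (∀ q ∈ l, q ∈ s) ∧
        p.1 = (l.map Prod.fst).sum ∧ (l.map Prod.snd, p.2) ∈ t}

/-!
A morphism `s : S → T` promotes to an ordinary relation `s^!` between `Multiset S` and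
`Multiset T`, relating `a₁ + ⋯ + aₖ` to `[β₁, …, βₖ]` whenever every `(aᵢ, βᵢ) ∈ s`; then
`t ∘ s` is the relational composite `s^! ○ t`. Promotion is functorial,
`(s^! ○ t)^! = s^! ○ t^!`: a sum of composites is a composite of sums, and conversely a witness
of `s^!` whose right-hand multiset splits as a sum splits along with it. Associativity of `MComp`
is thereby reduced to that of relational composition.
-/

theorem Multiset.exists_eq_add_of_map_eq_add {α β : Type*} (f : α → β) {l : Multiset α}
    {b c : Multiset β} (h : l.map f = b + c) :
    ∃ l₁ l₂, l = l₁ + l₂ ∧ l₁.map f = b ∧ l₂.map f = c := by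
  induction b using Multiset.induction generalizing l with
  | empty => exact ⟨0, l, by simp, by simp, by simpa using h⟩
  | cons x b ih =>
    obtain ⟨a, ha, rfl⟩ : ∃ a ∈ l, f a = x := Multiset.mem_map.1 (by simp [h])
    obtain ⟨l', rfl⟩ := Multiset.exists_cons_of_mem ha
    rw [Multiset.map_cons, Multiset.cons_add, Multiset.cons_inj_right] at h
    obtain ⟨l₁, l₂, rfl, rfl, rfl⟩ := ih h
    exact ⟨a ::ₘ l₁, l₂, by simp, by simp, rfl⟩

namespace MRel

open SetRel

variable {S T U : Type*}

def promote (s : Set (Multiset S × T)) : SetRel (Multiset S) (Multiset T) :=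
  {p | ∃ l : Multiset (Multiset S × T), (∀ q ∈ l, q ∈ s) ∧
        p.1 = (l.map Prod.fst).sum ∧ p.2 = l.map Prod.snd}

variable {s : Set (Multiset S × T)}

theorem zero_mem_promote : (0, 0) ∈ promote s :=
  ⟨0, by simp, by simp, by simp⟩

theorem add_mem_promote {p p' : Multiset S × Multiset T} (hp : p ∈ promote s)
    (hp' : p' ∈ promote s) : p + p' ∈ promote s := by
  obtain ⟨l, hl, h₁, h₂⟩ := hp
  obtain ⟨l', hl', h₁', h₂'⟩ := hp'
  refine ⟨l + l', fun q hq => ?_, by simp [h₁, h₁'], by simp [h₂, h₂']⟩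
  exact (Multiset.mem_add.1 hq).elim (hl q) (hl' q)

theorem singleton_mem_promote {q : Multiset S × T} (hq : q ∈ s) : (q.1, {q.2}) ∈ promote s :=
  ⟨{q}, by simpa using hq, by simp, by simp⟩

theorem promote_induction {P : Multiset S × Multiset T → Prop} (zero : P (0, 0))
    (add : ∀ p p', P p → P p' → P (p + p')) (singleton : ∀ q ∈ s, P (q.1, {q.2}))
    {p : Multiset S × Multiset T} (hp : p ∈ promote s) : P p := by
  obtain ⟨a, β⟩ := p
  obtain ⟨l, hl, rfl, rfl⟩ := hp
  induction l using Multiset.induction with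
  | empty => simpa using zero
  | cons q l ih =>
    simp only [Multiset.mem_cons, forall_eq_or_imp] at hl
    simpa using add _ _ (singleton q hl.1) (ih hl.2)

theorem eq_zero_of_mem_promote {a : Multiset S} (h : (a, 0) ∈ promote s) : a = 0 := by
  obtain ⟨l, -, rfl, hl⟩ := h
  simp [Multiset.map_eq_zero.1 hl.symm]

theorem exists_add_of_add_mem_promote {a : Multiset S} {β β' : Multiset T}
    (h : (a, β + β') ∈ promote s) :
    ∃ a₁ a₂, a = a₁ + a₂ ∧ (a₁, β) ∈ promote s ∧ (a₂, β') ∈ promote s := by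
  obtain ⟨l, hl, rfl, hβ⟩ := h
  obtain ⟨l₁, l₂, rfl, rfl, rfl⟩ := Multiset.exists_eq_add_of_map_eq_add _ hβ.symm
  simp only [Multiset.mem_add, or_imp, forall_and] at hl
  exact ⟨(l₁.map Prod.fst).sum, (l₂.map Prod.fst).sum, by simp, ⟨l₁, hl.1, rfl, rfl⟩, ⟨l₂, hl.2, rfl, rfl⟩⟩

theorem MComp_eq_comp (t : Set (Multiset T × U)) : MComp t s = promote s ○ t := by
  ext ⟨a, γ⟩
  constructor
  · rintro ⟨l, hl, ha, ht⟩
    exact ⟨_, ⟨l, hl, ha, rfl⟩, ht⟩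
  · rintro ⟨_, ⟨l, hl, ha, rfl⟩, ht⟩
    exact ⟨l, hl, ha, ht⟩

theorem promote_comp (t : Set (Multiset T × U)) :
    promote (promote s ○ t) = promote s ○ promote t := by
  ext ⟨a, γs⟩
  constructor
  · refine promote_induction ⟨0, zero_mem_promote, zero_mem_promote⟩ ?_ ?_
    · rintro _ _ ⟨β, hs, ht⟩ ⟨β', hs', ht'⟩
      exact ⟨β + β', add_mem_promote hs hs', add_mem_promote ht ht'⟩
    · rintro ⟨a, γ⟩ ⟨β, hs, ht⟩
      exact ⟨β, hs, singleton_mem_promote (q := (β, γ)) ht⟩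
  · rintro ⟨β, hs, ht⟩
    revert a
    refine promote_induction (P := fun p => ∀ a, (a, p.1) ∈ promote s →
      (a, p.2) ∈ promote (promote s ○ t)) ?_ ?_ ?_ ht
    · intro a ha
      rw [eq_zero_of_mem_promote ha]
      exact zero_mem_promote
    · rintro ⟨β, γs⟩ ⟨β', γs'⟩ ih ih' a ha
      obtain ⟨a₁, a₂, rfl, h₁, h₂⟩ := exists_add_of_add_mem_promote ha
      exact add_mem_promote (ih a₁ h₁) (ih' a₂ h₂)
    · rintro ⟨β, γ⟩ ht a ha
      exact singleton_mem_promote (q := (a, γ)) ⟨β, ha, ht⟩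

end MRel

open MRel in
/-- Composition in `MRel` is associative. -/
theorem MComp_assoc {S T U V : Type*} (s : Set (Multiset S × T))
    (t : Set (Multiset T × U)) (u : Set (Multiset U × V)) :
    MComp u (MComp t s) = MComp (MComp u t) s := by
  simp only [MComp_eq_comp, promote_comp, SetRel.comp_assoc]
end

section
/- For any sets S, T, U and any morphism s ⊆ Multiset (S ⊕ T) × U in MRel, there is exactly one morphism Λ(s) ⊆ Multiset S × (Multiset T × U), namely Λ(s) = {(a,(b,β)) | ((a,b),β) ∈ s}, such that ev ∘ (Λ(s) × Id_T) = s, where ev = {(([(b,β)],b),β)}. Hence MRel is cartesian closed with exponential Multiset S × T. -/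
/-- The identity morphism of `S` in `MRel`. -/
def MId (S : Type*) : Set (Multiset S × S) := {p | ∃ α : S, p = ({α}, α)}

/-- The product morphism `f × g : S ⊕ T → X ⊕ Y` in `MRel`, the product of objects being
disjoint union (`Multiset (S ⊕ T)` canonically identified with `Multiset S × Multiset T`). -/
def MProdMor {S T X Y : Type*} (f : Set (Multiset S × X)) (g : Set (Multiset T × Y)) :
    Set (Multiset (S ⊕ T) × (X ⊕ Y)) :=
  {p | (∃ a x, (a, x) ∈ f ∧ p = (a.map Sum.inl, Sum.inl x)) ∨
       (∃ b y, (b, y) ∈ g ∧ p = (b.map Sum.inr, Sum.inr y))}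

/-- The evaluation morphism `ev_{S,T} = {(([(a,β)],a),β)} : (Multiset S × T) ⊕ S → T`. -/
def MEv (S T : Type*) : Set (Multiset ((Multiset S × T) ⊕ S) × T) :=
  {p | ∃ a : Multiset S, p.1 = {Sum.inl (a, p.2)} + a.map Sum.inr}

/-- Currying: `Λ(s) = {(a,(b,β)) | ((a,b),β) ∈ s}`. -/
def MCurry {S T U : Type*} (s : Set (Multiset (S ⊕ T) × U)) :
    Set (Multiset S × (Multiset T × U)) :=
  {p | (p.1.map Sum.inl + p.2.1.map Sum.inr, p.2.2) ∈ s}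


/-!
`Multiset (S ⊕ T)` is in bijection with `Multiset S × Multiset T` via `Multiset.disjSum`. In a
composite `ev ∘ (f × Id_T)` the evaluation pair `inl (b, u) ::ₘ b.map inr` forces exactly one
element `(a.map inl, inl (b, u))` coming from `f` and, for every `t ∈ b`, one pair
`({inr t}, inr t)` coming from the identity; so `(c, u)` lies in the composite iff
`c = a.disjSum b` for some `(a, (b, u)) ∈ f`. Hence `Λ (ev ∘ (f × Id)) = f` for every `f` and
`ev ∘ (Λ s × Id) = s` for every `s`, which is existence and uniqueness at once.
-/

namespace Multiset

variable {α β : Type*}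

theorem filterMap_const_none (s : Multiset α) : s.filterMap (fun _ => (none : Option β)) = 0 :=
  Quot.inductionOn s fun _ => by simp

theorem disjSum_inj {s₁ s₂ : Multiset α} {t₁ t₂ : Multiset β} :
    s₁.disjSum t₁ = s₂.disjSum t₂ ↔ s₁ = s₂ ∧ t₁ = t₂ := by
  refine ⟨fun h => ⟨?_, ?_⟩, fun h => h.1 ▸ h.2 ▸ rfl⟩
  · simpa [disjSum, filterMap_add, filterMap_map, Function.comp_def, filterMap_const_none]
      using congrArg (filterMap Sum.getLeft?) h
  · simpa [disjSum, filterMap_add, filterMap_map, Function.comp_def, filterMap_const_none]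
      using congrArg (filterMap Sum.getRight?) h

theorem exists_disjSum_eq (u : Multiset (α ⊕ β)) :
    ∃ (s : Multiset α) (t : Multiset β), s.disjSum t = u := by
  induction u using Multiset.induction with
  | empty => exact ⟨0, 0, rfl⟩
  | cons x u ih =>
    obtain ⟨s, t, rfl⟩ := ih
    rcases x with a | b
    · exact ⟨a ::ₘ s, t, by simp [disjSum]⟩
    · exact ⟨s, b ::ₘ t, by simp [disjSum]⟩

end Multiset

section MRel

variable {S T U X : Type*}

lemma mem_MCurry {s : Set (Multiset (S ⊕ T) × U)} {a : Multiset S} {b : Multiset T} {u : U} :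
    (a, (b, u)) ∈ MCurry s ↔ (a.disjSum b, u) ∈ s :=
  Iff.rfl

lemma exists_of_mem_MProdMor_of_snd_eq_inl {Y : Type*} {f : Set (Multiset S × X)}
    {g : Set (Multiset T × Y)} {q : Multiset (S ⊕ T) × (X ⊕ Y)} (hq : q ∈ MProdMor f g) {x : X}
    (hx : q.2 = Sum.inl x) : ∃ a, (a, x) ∈ f ∧ q.1 = a.map Sum.inl := by
  rcases hq with ⟨a, x', hf, rfl⟩ | ⟨b, y, -, rfl⟩
  · cases hx
    exact ⟨a, hf, rfl⟩
  · cases hx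

lemma eq_of_mem_MProdMor_MId_of_snd_eq_inr {f : Set (Multiset S × X)}
    {q : Multiset (S ⊕ T) × (X ⊕ T)} (hq : q ∈ MProdMor f (MId T)) {t : T}
    (ht : q.2 = Sum.inr t) : q = ({Sum.inr t}, Sum.inr t) := by
  rcases hq with ⟨a, x, -, rfl⟩ | ⟨b, t', ⟨t'', h⟩, rfl⟩
  · cases ht
  · cases ht
    cases h
    rfl

/-- The pairs of `f × Id_T` through which the identity passes the multiset `b` on to `ev`. -/
def idWitness (S X : Type*) (b : Multiset T) : Multiset (Multiset (S ⊕ T) × (X ⊕ T)) :=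
  b.map fun t => ({Sum.inr t}, Sum.inr t)

lemma map_snd_idWitness (b : Multiset T) :
    (idWitness S X b).map Prod.snd = b.map Sum.inr := by
  simp [idWitness]

lemma sum_map_fst_idWitness (b : Multiset T) :
    ((idWitness S X b).map Prod.fst).sum = b.map Sum.inr := by
  simpa [idWitness, Function.comp_def] using
    Multiset.sum_map_singleton (b.map (Sum.inr : T → S ⊕ T))

lemma mem_MProdMor_MId_of_mem_idWitness (f : Set (Multiset S × X)) {b : Multiset T}
    {q : Multiset (S ⊕ T) × (X ⊕ T)} (hq : q ∈ idWitness S X b) :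
    q ∈ MProdMor f (MId T) := by
  obtain ⟨t, -, rfl⟩ := Multiset.mem_map.mp hq
  exact Or.inr ⟨{t}, t, ⟨t, rfl⟩, by simp⟩

lemma eq_idWitness_of_forall_mem_MProdMor_MId {f : Set (Multiset S × X)}
    {l : Multiset (Multiset (S ⊕ T) × (X ⊕ T))} (hl : ∀ q ∈ l, q ∈ MProdMor f (MId T))
    {b : Multiset T} (hb : l.map Prod.snd = b.map Sum.inr) : l = idWitness S X b := by
  let φ : X ⊕ T → Multiset (S ⊕ T) × (X ⊕ T) :=
    fun y => (y.elim (fun _ => 0) fun t => {Sum.inr t}, y)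
  have hφ : ∀ q ∈ l, φ q.2 = q := by
    intro q hq
    obtain ⟨t, -, ht⟩ := Multiset.mem_map.mp (hb ▸ Multiset.mem_map_of_mem Prod.snd hq)
    rw [eq_of_mem_MProdMor_MId_of_snd_eq_inr (hl q hq) ht.symm]
    rfl
  calc l = (l.map Prod.snd).map φ := by
        rw [Multiset.map_map]
        exact ((Multiset.map_congr rfl hφ).trans (Multiset.map_id' l)).symm
    _ = idWitness S X b := by
        rw [hb, Multiset.map_map]
        rfl

lemma mem_MComp_MEv_MProdMor_MId {f : Set (Multiset S × (Multiset T × U))}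
    {c : Multiset (S ⊕ T)} {u : U} :
    (c, u) ∈ MComp (MEv T U) (MProdMor f (MId T)) ↔
      ∃ a b, (a, (b, u)) ∈ f ∧ a.disjSum b = c := by
  constructor
  · rintro ⟨l, hl, hc, b, hb⟩
    dsimp only at hc hb
    rw [Multiset.singleton_add] at hb
    obtain ⟨q, hq, hqb⟩ := Multiset.mem_map.mp (hb ▸ Multiset.mem_cons_self _ _)
    obtain ⟨l', rfl⟩ := Multiset.exists_cons_of_mem hq
    rw [Multiset.map_cons, hqb, Multiset.cons_inj_right] at hb
    have hl' : l' = idWitness S _ b := eq_idWitness_of_forall_mem_MProdMor_MId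
      (fun r hr => hl r (Multiset.mem_cons_of_mem hr)) hb
    obtain ⟨a, hf, hqa⟩ :=
      exists_of_mem_MProdMor_of_snd_eq_inl (hl q (Multiset.mem_cons_self _ _)) hqb
    refine ⟨a, b, hf, ?_⟩
    rw [hc, Multiset.map_cons, Multiset.sum_cons, hqa, hl', sum_map_fst_idWitness]
    rfl
  · rintro ⟨a, b, hf, rfl⟩
    refine ⟨(a.map Sum.inl, Sum.inl (b, u)) ::ₘ idWitness S _ b, ?_, ?_, b, ?_⟩
    · intro q hq
      rcases Multiset.mem_cons.mp hq with rfl | hq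
      · exact Or.inl ⟨a, (b, u), hf, rfl⟩
      · exact mem_MProdMor_MId_of_mem_idWitness f hq
    · rw [Multiset.map_cons, Multiset.sum_cons, sum_map_fst_idWitness]
      rfl
    · rw [Multiset.map_cons, map_snd_idWitness]
      rfl

lemma MComp_MEv_MProdMor_MCurry (s : Set (Multiset (S ⊕ T) × U)) :
    MComp (MEv T U) (MProdMor (MCurry s) (MId T)) = s := by
  ext ⟨c, u⟩
  obtain ⟨a, b, rfl⟩ := Multiset.exists_disjSum_eq c
  simp [mem_MComp_MEv_MProdMor_MId, mem_MCurry, Multiset.disjSum_inj]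

lemma MCurry_MComp_MEv_MProdMor (f : Set (Multiset S × (Multiset T × U))) :
    MCurry (MComp (MEv T U) (MProdMor f (MId T))) = f := by
  ext ⟨a, b, u⟩
  simp [mem_MCurry, mem_MComp_MEv_MProdMor_MId, Multiset.disjSum_inj]

end MRel

/-- For any morphism `s : S ⊕ T → U` in `MRel`, `Λ(s)` is the unique morphism
`f : S → (Multiset T × U)` such that `ev ∘ (f × Id_T) = s`; hence `MRel` is cartesian
closed with exponential object `Multiset S × T`. -/
theorem MRel_cartesianClosed {S T U : Type*} (s : Set (Multiset (S ⊕ T) × U)) :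
    MComp (MEv T U) (MProdMor (MCurry s) (MId T)) = s ∧
      ∀ f : Set (Multiset S × (Multiset T × U)),
        MComp (MEv T U) (MProdMor f (MId T)) = s → f = MCurry s :=
  ⟨MComp_MEv_MProdMor_MCurry s, fun f hf => hf ▸ (MCurry_MComp_MEv_MProdMor f).symm⟩
end

section
/- The set D of quasi-finite ℕ-indexed sequences of finite multisets, built as the union of the chain D₀ = ∅, D_{n+1} = quasi-finite sequences over D_n, is in canonical bijection with Multiset D × D via (a₁,a₂,a₃,…) ↦ (a₁,(a₂,a₃,…)). -/
/-- Quasi-finite `ℕ`-indexed sequences of finite multisets over `Λ`: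
all but finitely many entries are the empty multiset. -/
def QFSeq (Λ : Type*) : Type _ := {f : ℕ → Multiset Λ // (Function.support f).Finite}

/-- The tail of a quasi-finite sequence is quasi-finite. -/
def QFSeq.tail {Λ : Type*} (f : QFSeq Λ) : QFSeq Λ :=
  ⟨fun i => f.1 (i + 1), by
    have : Function.support (fun i => f.1 (i + 1)) ⊆ (fun i : ℕ => i + 1) ⁻¹' Function.support f.1 := by
      intro i hi; exact hi
    exact Set.Finite.subset
      (Set.Finite.preimage (Set.injOn_of_injective (add_left_injective 1)) f.2) this⟩

/-!
An element of `D = ⋃ₙ Dₙ` is the code of a quasi-finite sequence whose entries lie in `D`, and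
conversely such a code lies in `D`: the finitely many elements occurring in the sequence all lie in
a common `D_N` because the chain is increasing, so the code lies in `D_{N+1}`. Hence `ι` identifies
`D` with the quasi-finite sequences over `D`, which split as head and tail.
-/

namespace QFSeq

variable {Λ : Type*}

def cons (m : Multiset Λ) (g : QFSeq Λ) : QFSeq Λ :=
  ⟨fun i => Nat.casesOn i m g.1, by
    refine (g.2.image (· + 1)).insert 0 |>.subset fun i hi => ?_
    cases i with
    | zero => exact Set.mem_insert _ _
    | succ n => exact Set.mem_insert_of_mem _ ⟨n, hi, rfl⟩⟩

theorem cons_head_tail (f : QFSeq Λ) : cons (f.1 0) f.tail = f :=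
  Subtype.ext <| funext fun i => by cases i <;> rfl

def withEntriesIn (S : Set Λ) : Set (QFSeq Λ) := {f | ∀ i, ∀ x ∈ f.1 i, x ∈ S}

def entries (f : QFSeq Λ) : Set Λ := {x | ∃ i, x ∈ f.1 i}

theorem finite_entries (f : QFSeq Λ) : f.entries.Finite := by
  refine (f.2.biUnion fun i _ => (f.1 i).finite_toSet).subset ?_
  rintro x ⟨i, hx⟩
  exact Set.mem_biUnion (fun h0 : f.1 i = 0 => Multiset.notMem_zero x (h0 ▸ hx)) hx

theorem mem_withEntriesIn_iff_entries_subset {S : Set Λ} {f : QFSeq Λ} :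
    f ∈ withEntriesIn S ↔ f.entries ⊆ S :=
  ⟨fun hf _ ⟨i, hx⟩ => hf i _ hx, fun hf i _ hx => hf ⟨i, hx⟩⟩

theorem withEntriesIn_mono {S T : Set Λ} (h : S ⊆ T) : withEntriesIn S ⊆ withEntriesIn T :=
  fun _ hf i x hx => h (hf i x hx)

theorem tail_mem_withEntriesIn {S : Set Λ} {f : QFSeq Λ} (hf : f ∈ withEntriesIn S) :
    f.tail ∈ withEntriesIn S :=
  fun i => hf (i + 1)

theorem cons_mem_withEntriesIn {S : Set Λ} {m : Multiset Λ} {g : QFSeq Λ}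
    (hm : ∀ x ∈ m, x ∈ S) (hg : g ∈ withEntriesIn S) : cons m g ∈ withEntriesIn S
  | 0 => hm
  | i + 1 => hg i

def consEquiv (S : Set Λ) :
    {m : Multiset Λ // ∀ x ∈ m, x ∈ S} × withEntriesIn S ≃ withEntriesIn S where
  toFun p := ⟨cons p.1 p.2, cons_mem_withEntriesIn p.1.2 p.2.2⟩
  invFun f := (⟨f.1.1 0, f.2 0⟩, ⟨f.1.tail, tail_mem_withEntriesIn f.2⟩)
  left_inv _ := rfl
  right_inv f := Subtype.ext f.1.cons_head_tail

section Chain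

variable {ι : QFSeq Λ → Λ} {D : ℕ → Set Λ}

theorem monotone_chain (hD0 : D 0 = ∅) (hDsucc : ∀ n, D (n + 1) = ι '' withEntriesIn (D n)) :
    Monotone D := by
  refine monotone_nat_of_le_succ fun n => ?_
  induction n with
  | zero => simp [hD0]
  | succ n ih => simpa only [hDsucc] using Set.image_mono (withEntriesIn_mono ih)

theorem iUnion_chain_eq_image (hD0 : D 0 = ∅)
    (hDsucc : ∀ n, D (n + 1) = ι '' withEntriesIn (D n)) :
    ⋃ n, D n = ι '' withEntriesIn (⋃ n, D n) := by
  apply subset_antisymm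
  · refine Set.iUnion_subset fun n => ?_
    cases n with
    | zero => simp [hD0]
    | succ n => exact hDsucc n ▸ Set.image_mono (withEntriesIn_mono (Set.subset_iUnion D n))
  · rintro _ ⟨f, hf, rfl⟩
    obtain ⟨N, hN⟩ :=
      (monotone_chain hD0 hDsucc).directed_le.exists_mem_subset_of_finset_subset_biUnion
        (s := f.finite_entries.toFinset)
        (by simpa using mem_withEntriesIn_iff_entries_subset.1 hf)
    have hfN : f ∈ withEntriesIn (D N) :=
      mem_withEntriesIn_iff_entries_subset.2 (by simpa using hN)
    exact Set.mem_iUnion.2 ⟨N + 1, hDsucc N ▸ ⟨f, hfN, rfl⟩⟩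

end Chain

end QFSeq

/-- The set `D`, built as the union of the chain `D₀ = ∅`,
`D_{n+1} = ` (codes of) quasi-finite sequences of finite multisets over `D_n`
(the chain being realized inside an ambient type `Λ` via an injective coding `ι` of
quasi-finite sequences), is in canonical bijection with `Multiset D × D` via
`(a₁,a₂,a₃,…) ↦ (a₁,(a₂,a₃,…))`, i.e. `ι f ↦ (f 0, ι (tail f))`. -/
theorem D_iso_multiset_prod {Λ : Type*} (ι : QFSeq Λ → Λ) (hι : Function.Injective ι)
    (D : ℕ → Set Λ) (hD0 : D 0 = ∅)
    (hDsucc : ∀ n : ℕ, D (n + 1) = ι '' {f : QFSeq Λ | ∀ i : ℕ, ∀ x ∈ f.1 i, x ∈ D n}) :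
    ∃ e : (⋃ n, D n) ≃
        {p : Multiset Λ × Λ | (∀ x ∈ p.1, x ∈ ⋃ n, D n) ∧ p.2 ∈ ⋃ n, D n},
      ∀ (f : QFSeq Λ) (h : ι f ∈ ⋃ n, D n),
        (e ⟨ι f, h⟩ : Multiset Λ × Λ) = (f.1 0, ι f.tail) := by
  set U := ⋃ n, D n
  let decode : U ≃ QFSeq.withEntriesIn U :=
    (Equiv.setCongr (QFSeq.iUnion_chain_eq_image hD0 hDsucc)).trans (Equiv.Set.image ι _ hι).symm
  have decode_apply (f : QFSeq Λ) (h : ι f ∈ U) : (decode ⟨ι f, h⟩ : QFSeq Λ) = f :=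
    congrArg Subtype.val (Equiv.Set.image_symm_apply ι _ hι f _)
  refine ⟨decode.trans <| (QFSeq.consEquiv U).symm.trans <|
    ((Equiv.refl _).prodCongr decode.symm).trans Equiv.subtypeProdEquivProd.symm, fun f h => ?_⟩
  have hf : f ∈ QFSeq.withEntriesIn U := decode_apply f h ▸ (decode ⟨ι f, h⟩).2
  have hdecode : decode ⟨ι f, h⟩ = ⟨f, hf⟩ := Subtype.ext (decode_apply f h)
  simp only [Equiv.trans_apply, hdecode]
  rfl
end

section
/- In the relational model D, the interpretation of Δ = λx.x[x^!] is {([a :: α] ⊎ a) :: α | a ∈ Multiset D, α ∈ D}, and the interpretation of Ω = Δ[Δ^!] is empty. -/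
variable {D : Type*}

/-- `b :: α`: prepending a multiset to an element of `D ≅ Multiset D × D`. -/
def dcons (e : D ≃ Multiset D × D) (b : Multiset D) (α : D) : D := e.symm (b, α)

/-- The interpretation of `Δ = λx.x[x^!]` in the relational model:
`⟦Δ⟧ = {([a :: α] ⊎ a) :: α | a ∈ Multiset D, α ∈ D}`. -/
def interpDelta (e : D ≃ Multiset D × D) : Set D :=
  {d | ∃ (a : Multiset D) (α : D), d = dcons e (dcons e a α ::ₘ a) α}

/-! If `m :: α ∈ ⟦Δ⟧` then `m = [a :: α] ⊎ a` for some `a`, so `a :: α ∈ ⟦Δ⟧` again, with the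
same `α` and a strictly smaller `a`. When all elements of `m` lie in `⟦Δ⟧` this descent never
stops, contradicting the well-foundedness of `<` on finite multisets. -/

theorem dcons_inj (e : D ≃ Multiset D × D) {m m' : Multiset D} {α α' : D} :
    dcons e m α = dcons e m' α' ↔ m = m' ∧ α = α' :=
  e.symm.injective.eq_iff.trans Prod.mk_inj

theorem dcons_mem_interpDelta_iff (e : D ≃ Multiset D × D) {m : Multiset D} {α : D} :
    dcons e m α ∈ interpDelta e ↔ ∃ a, m = dcons e a α ::ₘ a := by
  simp only [interpDelta, Set.mem_ofPred_eq, dcons_inj]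
  constructor
  · rintro ⟨a, β, rfl, rfl⟩
    exact ⟨a, rfl⟩
  · rintro ⟨a, rfl⟩
    exact ⟨a, α, rfl, rfl⟩

theorem dcons_notMem_interpDelta_of_subset (e : D ≃ Multiset D × D) (α : D) (m : Multiset D)
    (hm : ∀ x ∈ m, x ∈ interpDelta e) : dcons e m α ∉ interpDelta e := by
  induction m using WellFoundedLT.induction with
  | ind m ih =>
    intro hΔ
    obtain ⟨a, rfl⟩ := (dcons_mem_interpDelta_iff e).1 hΔ
    exact ih a (Multiset.lt_cons_self a _)
      (fun x hx => hm x (Multiset.mem_cons_of_mem hx)) (hm _ (Multiset.mem_cons_self _ _))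

/-- The interpretation of `Ω = Δ[Δ^!]` in the relational model `D` is empty:
no `α` admits a nonempty multiset `m` of elements of `⟦Δ⟧` with `m :: α ∈ ⟦Δ⟧`,
where `⟦Δ⟧ = {([a :: α] ⊎ a) :: α | a ∈ Multiset D, α ∈ D}`. -/
theorem interp_Omega_empty (e : D ≃ Multiset D × D) :
    {α : D | ∃ m : Multiset D, m ≠ 0 ∧ (∀ x ∈ m, x ∈ interpDelta e) ∧
        dcons e m α ∈ interpDelta e} = ∅ :=
  Set.eq_empty_of_forall_notMem fun α ⟨m, _, hm, hΔ⟩ =>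
    dcons_notMem_interpDelta_of_subset e α m hm hΔ
end
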